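/- Let (Ω, F, P) be a probability space, let n ≥ 1, and for each t ∈ {1,…,n} let p_t be a probability mass function on ℕ with H(p_t) < ∞, and let R_t^1, R_t^2, … : Ω → ℕ be a sequence of random variables that is independent and identically distributed with common law p_t (no independence across different t is assumed). Let p̄(r) = (1/n) Σ_{t=1}^n p_t(r), define the empirical distributions P̂_t^m(r)(ω) = (1/m) #{k ≤ m : R_t^k(ω) = r} and P̂^m(r) = (1/n) Σ_{t=1}^n P̂_t^m(r). Then, with probability 1, lim_{m→∞} Σ_r −P̂^m(r) log P̂^m(r) = H(p̄). -/

import Mathlib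

/-!
Write `g = -log p̄`. Since `p_t ≤ n p̄`, the weight `g` is integrable under every `p_t`, so the
strong law of large numbers shows that almost surely every empirical frequency converges to its
probability and the cross entropy `∑ P̂ᵐ(r) g(r) = (1/n) ∑_t (1/m) ∑_{k<m} g(R_t^k)` converges to
`∑ p̄ g = H(p̄)`; moreover almost surely no value of probability zero is ever observed.
On such an outcome, Gibbs' inequality bounds `H(P̂ᵐ)` above by the cross entropy, while pointwise
convergence `P̂ᵐ → p̄` and nonnegativity of `-x log x` on `[0, 1]` give `H(P̂ᵐ) > a` eventually for
every `a < H(p̄)`.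
-/

open MeasureTheory ProbabilityTheory Filter Real Topology Finset

section EmpiricalFreq

variable {α : Type*} [DecidableEq α]

noncomputable def empiricalFreq (x : ℕ → α) (m : ℕ) (r : α) : ℝ := #{k ∈ range m | x k = r} / m

lemma empiricalFreq_nonneg (x : ℕ → α) (m : ℕ) (r : α) : 0 ≤ empiricalFreq x m r := by
  unfold empiricalFreq; positivity

lemma exists_eq_of_empiricalFreq_ne_zero {x : ℕ → α} {m : ℕ} {r : α}
    (h : empiricalFreq x m r ≠ 0) : ∃ k, x k = r := by
  by_contra! hr
  simp [empiricalFreq, hr] at h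

lemma hasSum_empiricalFreq_mul (x : ℕ → α) (m : ℕ) (f : α → ℝ) :
    HasSum (fun r => empiricalFreq x m r * f r) ((∑ k ∈ range m, f (x k)) / m) := by
  have hzero : ∀ r ∉ (range m).image x, empiricalFreq x m r * f r = 0 := fun r hr => by
    have : #{k ∈ range m | x k = r} = 0 :=
      card_eq_zero.2 (filter_eq_empty_iff.2 fun k hk hkr => hr (mem_image.2 ⟨k, hk, hkr⟩))
    simp [empiricalFreq, this]
  convert (hasSum_sum_of_ne_finset_zero hzero : HasSum _ _) using 1
  rw [sum_comp, sum_div]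
  simp only [empiricalFreq, nsmul_eq_mul, div_mul_eq_mul_div]

end EmpiricalFreq

section UniformMixture

variable {α : Type*} {n : ℕ}

noncomputable def uniformMixture (p : Fin n → α → ℝ) (r : α) : ℝ := 1 / n * ∑ t, p t r

lemma uniformMixture_nonneg {p : Fin n → α → ℝ} (hp0 : ∀ t r, 0 ≤ p t r) (r : α) :
    0 ≤ uniformMixture p r :=
  mul_nonneg (by positivity) (sum_nonneg fun t _ => hp0 t r)

lemma le_mul_uniformMixture {p : Fin n → α → ℝ} (hp0 : ∀ t r, 0 ≤ p t r) (t : Fin n) (r : α) :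
    p t r ≤ n * uniformMixture p r := by
  have hn : (n : ℝ) ≠ 0 := by exact_mod_cast t.pos.ne'
  rw [uniformMixture, ← mul_assoc, mul_one_div_cancel hn, one_mul]
  exact single_le_sum (fun t' _ => hp0 t' r) (mem_univ t)

lemma uniformMixture_ne_zero {p : Fin n → α → ℝ} (hp0 : ∀ t r, 0 ≤ p t r) {t : Fin n} {r : α}
    (h : p t r ≠ 0) : uniformMixture p r ≠ 0 := by
  have := le_mul_uniformMixture hp0 t r
  intro h0
  rw [h0, mul_zero] at this
  exact h (le_antisymm this (hp0 t r))

lemma exists_ne_zero_of_uniformMixture_ne_zero {p : Fin n → α → ℝ} {r : α}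
    (h : uniformMixture p r ≠ 0) : ∃ t, p t r ≠ 0 := by
  by_contra! hp
  simp [uniformMixture, hp] at h

lemma hasSum_uniformMixture_mul {p : Fin n → α → ℝ} {f : α → ℝ} {a : Fin n → ℝ}
    (h : ∀ t, HasSum (fun r => p t r * f r) (a t)) :
    HasSum (fun r => uniformMixture p r * f r) (1 / n * ∑ t, a t) := by
  simp only [uniformMixture, mul_assoc, sum_mul]
  exact (hasSum_sum fun t _ => h t).mul_left _

lemma hasSum_uniformMixture (hn : n ≠ 0) {p : Fin n → α → ℝ} (h : ∀ t, HasSum (p t) 1) :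
    HasSum (uniformMixture p) 1 := by
  have := hasSum_uniformMixture_mul (f := 1) fun t => by simpa using h t
  simpa [hn] using this

lemma neg_log_uniformMixture_nonneg (hn : n ≠ 0) {p : Fin n → α → ℝ} (hp0 : ∀ t r, 0 ≤ p t r)
    (hp1 : ∀ t, HasSum (p t) 1) (r : α) : 0 ≤ -log (uniformMixture p r) :=
  neg_nonneg.2 <| log_nonpos (uniformMixture_nonneg hp0 r) <|
    le_hasSum (hasSum_uniformMixture hn hp1) r fun r' _ => uniformMixture_nonneg hp0 r'

lemma tendsto_uniformMixture {ι : Type*} {l : Filter ι} {q : ι → Fin n → α → ℝ}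
    {p : Fin n → α → ℝ} {r : α} (h : ∀ t, Tendsto (fun i => q i t r) l (𝓝 (p t r))) :
    Tendsto (fun i => uniformMixture (q i) r) l (𝓝 (uniformMixture p r)) :=
  (tendsto_finsetSum _ fun t _ => h t).const_mul _

lemma summable_mul_neg_log_uniformMixture {p : Fin n → α → ℝ} (hp0 : ∀ t r, 0 ≤ p t r)
    (hp1 : ∀ t, HasSum (p t) 1) (hH : ∀ t, Summable fun r => negMulLog (p t r)) (t : Fin n) :
    Summable fun r => p t r * -log (uniformMixture p r) := by
  have hn : (0 : ℝ) < n := by exact_mod_cast t.pos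
  refine .of_nonneg_of_le (fun r => mul_nonneg (hp0 t r) ?_) (fun r => ?_)
    ((hH t).add ((hp1 t).summable.mul_right (log n)))
  · exact neg_log_uniformMixture_nonneg t.pos.ne' hp0 hp1 r
  rcases (hp0 t r).eq_or_lt with h0 | h0
  · simp [← h0]
  have hlog : log (p t r) - log n ≤ log (uniformMixture p r) := by
    rw [← log_div h0.ne' hn.ne']
    exact log_le_log (by positivity) ((div_le_iff₀' hn).2 (le_mul_uniformMixture hp0 t r))
  calc p t r * -log (uniformMixture p r) ≤ p t r * (-log (p t r) + log n) :=
        mul_le_mul_of_nonneg_left (by linarith) (hp0 t r)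
    _ = negMulLog (p t r) + p t r * log n := by rw [negMulLog]; ring

end UniformMixture

section Entropy

variable {α : Type*}

lemma negMulLog_le_mul_neg_log_add_sub {p q : ℝ} (hp : 0 ≤ p) (hq : 0 ≤ q) (hpq : q ≠ 0 → p ≠ 0) :
    negMulLog q ≤ q * -log p + (p - q) := by
  rcases hq.eq_or_lt with rfl | hq
  · simpa using hp
  have hp : 0 < p := hp.lt_of_ne' (hpq hq.ne')
  have := mul_le_mul_of_nonneg_left (log_le_sub_one_of_pos (div_pos hp hq)) hq.le
  rw [log_div hp.ne' hq.ne', mul_sub, mul_sub, mul_div_cancel₀ _ hq.ne'] at this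
  rw [negMulLog]
  linarith

lemma tsum_negMulLog_le_tsum_mul_neg_log {p q : α → ℝ} (hp0 : ∀ r, 0 ≤ p r) (hq0 : ∀ r, 0 ≤ q r)
    (hpq : ∀ r, q r ≠ 0 → p r ≠ 0) (hp : HasSum p 1) (hq : HasSum q 1)
    (hqH : Summable fun r => negMulLog (q r)) (hqC : Summable fun r => q r * -log (p r)) :
    ∑' r, negMulLog (q r) ≤ ∑' r, q r * -log (p r) := by
  have hsub : HasSum (fun r => p r - q r) 0 := by simpa using hp.sub hq
  calc ∑' r, negMulLog (q r) ≤ ∑' r, (q r * -log (p r) + (p r - q r)) :=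
        hqH.tsum_le_tsum (fun r => negMulLog_le_mul_neg_log_add_sub (hp0 r) (hq0 r) (hpq r))
          (hqC.add hsub.summable)
    _ = ∑' r, q r * -log (p r) := by rw [hqC.tsum_add hsub.summable, hsub.tsum_eq, add_zero]

lemma eventually_lt_tsum_negMulLog {ι : Type*} {l : Filter ι} {q : ι → α → ℝ} {p : α → ℝ}
    (hq : ∀ᶠ i in l, ∀ r, q i r ∈ Set.Icc 0 1) (hqH : ∀ i, Summable fun r => negMulLog (q i r))
    (hlim : ∀ r, Tendsto (fun i => q i r) l (𝓝 (p r))) (hpH : Summable fun r => negMulLog (p r))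
    {a : ℝ} (ha : a < ∑' r, negMulLog (p r)) :
    ∀ᶠ i in l, a < ∑' r, negMulLog (q i r) := by
  obtain ⟨s, hs⟩ := (hpH.hasSum.eventually (lt_mem_nhds ha)).exists
  have hfin : Tendsto (fun i => ∑ r ∈ s, negMulLog (q i r)) l (𝓝 (∑ r ∈ s, negMulLog (p r))) :=
    tendsto_finsetSum s fun r _ => (continuous_negMulLog.tendsto _).comp (hlim r)
  filter_upwards [hfin.eventually (lt_mem_nhds hs), hq] with i hi hqi
  exact hi.trans_le ((hqH i).sum_le_tsum s fun r _ => negMulLog_nonneg (hqi r).1 (hqi r).2)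

theorem tendsto_tsum_negMulLog_of_tendsto_tsum_mul_neg_log {ι : Type*} {l : Filter ι}
    {q : ι → α → ℝ} {p : α → ℝ} (hp0 : ∀ r, 0 ≤ p r) (hp : HasSum p 1)
    (hq0 : ∀ i r, 0 ≤ q i r) (hq : ∀ᶠ i in l, HasSum (q i) 1)
    (hpq : ∀ i r, q i r ≠ 0 → p r ≠ 0)
    (hqH : ∀ i, Summable fun r => negMulLog (q i r))
    (hqC : ∀ i, Summable fun r => q i r * -log (p r))
    (hpH : Summable fun r => negMulLog (p r))
    (hlim : ∀ r, Tendsto (fun i => q i r) l (𝓝 (p r)))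
    (hcross : Tendsto (fun i => ∑' r, q i r * -log (p r)) l (𝓝 (∑' r, negMulLog (p r)))) :
    Tendsto (fun i => ∑' r, negMulLog (q i r)) l (𝓝 (∑' r, negMulLog (p r))) := by
  refine tendsto_order.2 ⟨fun a ha => eventually_lt_tsum_negMulLog ?_ hqH hlim hpH ha,
    fun b hb => ?_⟩
  · filter_upwards [hq] with i hqi r
    exact ⟨hq0 i r, le_hasSum hqi r fun r' _ => hq0 i r'⟩
  filter_upwards [hq, hcross.eventually (gt_mem_nhds hb)] with i hqi hi
  exact (tsum_negMulLog_le_tsum_mul_neg_log hp0 (hq0 i) (hpq i) hp hqi (hqH i) (hqC i)).trans_lt hi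

end Entropy

section DiscreteStrongLaw

variable {Ω α : Type*} [MeasurableSpace Ω] {μ : Measure Ω} {q : α → ℝ}

lemma ae_ne_zero_of_law [Countable α] {X : Ω → α}
    (hlaw : ∀ r, μ {ω | X ω = r} = ENNReal.ofReal (q r)) : ∀ᵐ ω ∂μ, q (X ω) ≠ 0 := by
  have : ∀ r, ∀ᵐ ω ∂μ, X ω = r → q r ≠ 0 := fun r => by
    by_cases hr : q r = 0
    · rw [ae_iff]
      simpa [hr] using hlaw r
    · exact .of_forall fun _ _ => hr
  filter_upwards [ae_all_iff.2 this] with ω hω using hω _ rfl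

variable [MeasurableSpace α] [MeasurableSingletonClass α]

lemma map_apply_singleton_of_law {X : Ω → α} (hX : Measurable X)
    (hlaw : ∀ r, μ {ω | X ω = r} = ENNReal.ofReal (q r)) (r : α) :
    μ.map X {r} = ENNReal.ofReal (q r) := by
  rw [Measure.map_apply hX (measurableSet_singleton r)]
  exact hlaw r

variable [Countable α]

lemma integrable_map_of_law {X : Ω → α} (hX : Measurable X)
    (hlaw : ∀ r, μ {ω | X ω = r} = ENNReal.ofReal (q r)) (hq0 : ∀ r, 0 ≤ q r) {g : α → ℝ}
    (hg : Summable fun r => q r * ‖g r‖) : Integrable g (μ.map X) := by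
  refine ⟨(measurable_of_countable g).aestronglyMeasurable, ?_⟩
  rw [HasFiniteIntegral, lintegral_countable']
  simp_rw [map_apply_singleton_of_law hX hlaw, ← ofReal_norm,
    ← ENNReal.ofReal_mul (norm_nonneg _),
    ← ENNReal.ofReal_tsum_of_nonneg (fun r => mul_nonneg (norm_nonneg _) (hq0 r))
      (hg.congr fun r => mul_comm _ _)]
  exact ENNReal.ofReal_lt_top

lemma integral_map_eq_tsum_of_law {X : Ω → α} (hX : Measurable X)
    (hlaw : ∀ r, μ {ω | X ω = r} = ENNReal.ofReal (q r)) (hq0 : ∀ r, 0 ≤ q r) {g : α → ℝ}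
    (hg : Summable fun r => q r * ‖g r‖) : ∫ a, g a ∂μ.map X = ∑' r, q r * g r := by
  rw [integral_countable (integrable_map_of_law hX hlaw hq0 hg)]
  simp_rw [measureReal_def, map_apply_singleton_of_law hX hlaw, ENNReal.toReal_ofReal (hq0 _),
    smul_eq_mul]

theorem ae_tendsto_sum_range_comp_div_of_iIndepFun {X : ℕ → Ω → α} (hX : ∀ k, Measurable (X k))
    (hindep : iIndepFun X μ) (hlaw : ∀ k r, μ {ω | X k ω = r} = ENNReal.ofReal (q r))
    (hq0 : ∀ r, 0 ≤ q r) {g : α → ℝ} (hg : Summable fun r => q r * ‖g r‖) :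
    ∀ᵐ ω ∂μ, Tendsto (fun m : ℕ => (∑ k ∈ range m, g (X k ω)) / m) atTop
      (𝓝 (∑' r, q r * g r)) := by
  have hmg : Measurable g := measurable_of_countable g
  have hident : ∀ k, IdentDistrib (X k) (X 0) μ μ := fun k =>
    ⟨(hX k).aemeasurable, (hX 0).aemeasurable, Measure.ext_of_singleton fun r => by
      rw [map_apply_singleton_of_law (hX k) (hlaw k), map_apply_singleton_of_law (hX 0) (hlaw 0)]⟩
  have hint : Integrable (fun ω => g (X 0 ω)) μ :=
    (integrable_map_measure hmg.aestronglyMeasurable (hX 0).aemeasurable).1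
      (integrable_map_of_law (hX 0) (hlaw 0) hq0 hg)
  have hmean : ∫ ω, g (X 0 ω) ∂μ = ∑' r, q r * g r := by
    rw [← integral_map (hX 0).aemeasurable hmg.aestronglyMeasurable,
      integral_map_eq_tsum_of_law (hX 0) (hlaw 0) hq0 hg]
  simpa only [hmean] using strong_law_ae_real (fun k ω => g (X k ω)) hint
    (fun i j hij => (hindep.indepFun hij).comp hmg hmg) fun k => (hident k).comp hmg

theorem ae_tendsto_empiricalFreq_of_iIndepFun [DecidableEq α] {X : ℕ → Ω → α}
    (hX : ∀ k, Measurable (X k)) (hindep : iIndepFun X μ)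
    (hlaw : ∀ k r, μ {ω | X k ω = r} = ENNReal.ofReal (q r)) (hq0 : ∀ r, 0 ≤ q r) (r : α) :
    ∀ᵐ ω ∂μ, Tendsto (fun m => empiricalFreq (X · ω) m r) atTop (𝓝 (q r)) := by
  have hg : Summable fun a => q a * ‖if a = r then (1 : ℝ) else 0‖ :=
    summable_of_ne_finset_zero (s := {r}) fun a ha => by simp [mem_singleton.not.1 ha]
  simpa [empiricalFreq, sum_boole] using
    ae_tendsto_sum_range_comp_div_of_iIndepFun hX hindep hlaw hq0 hg

end DiscreteStrongLaw

theorem tendsto_tsum_negMulLog_uniformMixture_empiricalFreq {α : Type*} [DecidableEq α] {n : ℕ}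
    (hn : n ≠ 0) {p : Fin n → α → ℝ} (hp0 : ∀ t r, 0 ≤ p t r) (hp1 : ∀ t, HasSum (p t) 1)
    (hH : ∀ t, Summable fun r => negMulLog (p t r)) {x : Fin n → ℕ → α}
    (hsupp : ∀ t k, p t (x t k) ≠ 0)
    (hfreq : ∀ t r, Tendsto (fun m => empiricalFreq (x t) m r) atTop (𝓝 (p t r)))
    (hcross : ∀ t, Tendsto (fun m : ℕ => (∑ k ∈ range m, -log (uniformMixture p (x t k))) / m)
      atTop (𝓝 (∑' r, p t r * -log (uniformMixture p r)))) :
    Tendsto (fun m => ∑' r, negMulLog (uniformMixture (fun t => empiricalFreq (x t) m) r))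
      atTop (𝓝 (∑' r, negMulLog (uniformMixture p r))) := by
  set q := fun m => uniformMixture (fun t => empiricalFreq (x t) m)
  have hq : ∀ (m : ℕ) (f : α → ℝ), HasSum (fun r => q m r * f r)
      (1 / n * ∑ t, (∑ k ∈ range m, f (x t k)) / m) :=
    fun m f => hasSum_uniformMixture_mul fun t => hasSum_empiricalFreq_mul (x t) m f
  have hpH : HasSum (fun r => negMulLog (uniformMixture p r))
      (1 / n * ∑ t, ∑' r, p t r * -log (uniformMixture p r)) := by
    simpa only [negMulLog, neg_mul_comm] using hasSum_uniformMixture_mul fun t =>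
      (summable_mul_neg_log_uniformMixture hp0 hp1 hH t).hasSum
  refine tendsto_tsum_negMulLog_of_tendsto_tsum_mul_neg_log (uniformMixture_nonneg hp0)
    (hasSum_uniformMixture hn hp1)
    (fun m => uniformMixture_nonneg fun t => empiricalFreq_nonneg (x t) m) ?_ ?_
    (fun m => by
      simpa only [negMulLog, neg_mul_comm] using (hq m fun r => -log (q m r)).summable)
    (fun m => (hq m _).summable) hpH.summable
    (fun r => tendsto_uniformMixture fun t => hfreq t r) ?_
  · filter_upwards [eventually_ne_atTop 0] with m hm
    simpa [hm, hn] using hq m 1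
  · intro m r h
    obtain ⟨t, ht⟩ := exists_ne_zero_of_uniformMixture_ne_zero h
    obtain ⟨k, rfl⟩ := exists_eq_of_empiricalFreq_ne_zero ht
    exact uniformMixture_ne_zero hp0 (hsupp t k)
  · rw [hpH.tsum_eq]
    exact ((tendsto_finsetSum _ fun t _ => hcross t).const_mul _).congr fun m =>
      (hq m _).tsum_eq.symm

theorem plugin_total_entropy_converges_general
    {Ω : Type*} [MeasurableSpace Ω] (μ : Measure Ω)
    (n : ℕ) (hn : 1 ≤ n) (p : Fin n → ℕ → ℝ)
    (hp0 : ∀ t r, 0 ≤ p t r) (hp1 : ∀ t, HasSum (p t) 1)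
    (hH : ∀ t, Summable (fun r => -(p t r) * log (p t r)))
    (R : Fin n → ℕ → Ω → ℕ) (hmeas : ∀ t k, Measurable (R t k))
    (hindep : ∀ t, iIndepFun (R t) μ)
    (hlaw : ∀ t k r, μ {ω | R t k ω = r} = ENNReal.ofReal (p t r))
    (pbar : ℕ → ℝ) (hpbar : ∀ r, pbar r = (1 / n) * ∑ t, p t r)
    (Phat_t : Fin n → ℕ → Ω → ℕ → ℝ)
    (hPhat_t : ∀ t m ω r,
      Phat_t t m ω r = (((Finset.range m).filter (fun k => R t k ω = r)).card : ℝ) / m)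
    (Phat : ℕ → Ω → ℕ → ℝ)
    (hPhat : ∀ m ω r, Phat m ω r = (1 / n) * ∑ t, Phat_t t m ω r) :
    ∀ᵐ ω ∂μ, Tendsto (fun m => ∑' r, -(Phat m ω r) * log (Phat m ω r))
      atTop (nhds (∑' r, -(pbar r) * log (pbar r))) := by
  have hn0 : n ≠ 0 := by omega
  obtain rfl : pbar = uniformMixture p := funext hpbar
  obtain rfl : Phat_t = fun t m ω => empiricalFreq (R t · ω) m := by
    ext t m ω r; exact hPhat_t t m ω r
  obtain rfl : Phat = fun m ω => uniformMixture fun t => empiricalFreq (R t · ω) m := by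
    ext m ω r; exact hPhat m ω r
  have hfreq : ∀ᵐ ω ∂μ, ∀ t r, Tendsto (fun m => empiricalFreq (R t · ω) m r) atTop (𝓝 (p t r)) :=
    ae_all_iff.2 fun t => ae_all_iff.2 <|
      ae_tendsto_empiricalFreq_of_iIndepFun (hmeas t) (hindep t) (hlaw t) (hp0 t)
  have hcross : ∀ᵐ ω ∂μ, ∀ t, Tendsto
      (fun m : ℕ => (∑ k ∈ range m, -log (uniformMixture p (R t k ω))) / m) atTop
      (𝓝 (∑' r, p t r * -log (uniformMixture p r))) :=
    ae_all_iff.2 fun t => ae_tendsto_sum_range_comp_div_of_iIndepFun (hmeas t) (hindep t)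
      (hlaw t) (hp0 t) <| (summable_mul_neg_log_uniformMixture hp0 hp1 hH t).congr fun r => by
        rw [norm_of_nonneg (neg_log_uniformMixture_nonneg hn0 hp0 hp1 r)]
  have hsupp : ∀ᵐ ω ∂μ, ∀ t k, p t (R t k ω) ≠ 0 :=
    ae_all_iff.2 fun t => ae_all_iff.2 fun k => ae_ne_zero_of_law (hlaw t k)
  filter_upwards [hfreq, hcross, hsupp] with ω hfreq hcross hsupp
  exact tendsto_tsum_negMulLog_uniformMixture_empiricalFreq hn0 hp0 hp1 hH hsupp hfreq hcross

/-- Statement 1 of the Theorem: under the repeated trial assumption, the plug-in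
estimate of the total entropy converges almost surely to the entropy of the
time-averaged distribution `pbar`. -/
theorem plugin_total_entropy_converges
    {Ω : Type*} [MeasurableSpace Ω] (μ : Measure Ω) [IsProbabilityMeasure μ]
    (n : ℕ) (hn : 1 ≤ n) (p : Fin n → ℕ → ℝ)
    (hp0 : ∀ t r, 0 ≤ p t r) (hp1 : ∀ t, HasSum (p t) 1)
    (hH : ∀ t, Summable (fun r => -(p t r) * log (p t r)))
    (R : Fin n → ℕ → Ω → ℕ) (hmeas : ∀ t k, Measurable (R t k))
    (hindep : ∀ t, iIndepFun (R t) μ)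
    (hlaw : ∀ t k r, μ {ω | R t k ω = r} = ENNReal.ofReal (p t r))
    (pbar : ℕ → ℝ) (hpbar : ∀ r, pbar r = (1 / n) * ∑ t, p t r)
    (Phat_t : Fin n → ℕ → Ω → ℕ → ℝ)
    (hPhat_t : ∀ t m ω r,
      Phat_t t m ω r = (((Finset.range m).filter (fun k => R t k ω = r)).card : ℝ) / m)
    (Phat : ℕ → Ω → ℕ → ℝ)
    (hPhat : ∀ m ω r, Phat m ω r = (1 / n) * ∑ t, Phat_t t m ω r) :
    ∀ᵐ ω ∂μ, Tendsto (fun m => ∑' r, -(Phat m ω r) * log (Phat m ω r))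
      atTop (nhds (∑' r, -(pbar r) * log (pbar r))) :=
  plugin_total_entropy_converges_general μ n hn p hp0 hp1 hH R hmeas hindep hlaw pbar hpbar Phat_t
    hPhat_t Phat hPhat
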